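/- Convergence of multiple zeta values: let r ≥ 1 and let n₁,…,n_r be integers with n_i ≥ 1 for all i and n_r ≥ 2. Then the family (1/(k₁^{n₁}⋯k_r^{n_r})), indexed by tuples of integers 0 < k₁ < k₂ < ⋯ < k_r, is summable. -/

import Mathlib

/-!
Since `k₁ ≤ ⋯ ≤ k_r`, the surplus exponent of `k_r` can be spread over all coordinates:
`(k₁ ⋯ k_r)^(1 + 1/r) ≤ (k₁ ⋯ k_r) · k_r ≤ k₁^{n₁} ⋯ k_r^{n_r}`. The family is therefore
dominated by `∏ᵢ kᵢ^{-(1 + 1/r)}`, which is summable over all of `ℕ^r` as a product of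
convergent `p`-series.
-/

open Finset

theorem summable_pi_prod_of_nonneg {ι : Type*} [Fintype ι] {κ : ι → Type*}
    {f : ∀ i, κ i → ℝ} (hf_nonneg : ∀ i y, 0 ≤ f i y) (hf : ∀ i, Summable (f i)) :
    Summable fun x : ∀ i, κ i => ∏ i, f i (x i) := by
  classical
  refine summable_of_sum_le (c := ∏ i, ∑' y, f i y)
    (fun x => prod_nonneg fun i _ => hf_nonneg i _) fun s => ?_
  calc ∑ x ∈ s, ∏ i, f i (x i)
      ≤ ∑ x ∈ Fintype.piFinset fun i => s.image (· i), ∏ i, f i (x i) :=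
        sum_le_sum_of_subset_of_nonneg
          (fun x hx => Fintype.mem_piFinset.2 fun i => mem_image_of_mem _ hx)
          fun x _ _ => prod_nonneg fun i _ => hf_nonneg i _
    _ = ∏ i, ∑ y ∈ s.image (· i), f i y := (prod_univ_sum _ _).symm
    _ ≤ ∏ i, ∑' y, f i y :=
        prod_le_prod (fun i _ => sum_nonneg fun y _ => hf_nonneg i y)
          fun i _ => (hf i).sum_le_tsum _ fun y _ => hf_nonneg i y

theorem summable_prod_one_div_nat_rpow {ι : Type*} [Fintype ι] {p : ℝ} (hp : 1 < p) :
    Summable fun k : ι → ℕ => ∏ i, 1 / (k i : ℝ) ^ p :=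
  summable_pi_prod_of_nonneg (κ := fun _ => ℕ) (f := fun _ m => 1 / (m : ℝ) ^ p)
    (fun _ _ => by positivity) fun _ => Real.summable_one_div_nat_rpow.2 hp

theorem prod_rpow_one_add_inv_card_le_prod_pow {ι : Type*} [Fintype ι] {x : ι → ℝ}
    {n : ι → ℕ} {j : ι} (hx : ∀ i, 1 ≤ x i) (hxj : ∀ i, x i ≤ x j) (hn : ∀ i, 1 ≤ n i)
    (hnj : 2 ≤ n j) :
    ∏ i, x i ^ (1 + (Fintype.card ι : ℝ)⁻¹) ≤ ∏ i, x i ^ n i := by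
  classical
  have hx0 : ∀ i, 0 ≤ x i := fun i => zero_le_one.trans (hx i)
  have hP : 0 < ∏ i, x i := prod_pos fun i _ => zero_lt_one.trans_le (hx i)
  have hroot : (∏ i, x i) ^ (Fintype.card ι : ℝ)⁻¹ ≤ x j :=
    calc (∏ i, x i) ^ (Fintype.card ι : ℝ)⁻¹
        ≤ (x j ^ Fintype.card ι) ^ (Fintype.card ι : ℝ)⁻¹ := by
          gcongr
          exact (prod_le_prod (fun i _ => hx0 i) fun i _ => hxj i).trans_eq
            (by rw [prod_const, card_univ])
      _ = x j := Real.pow_rpow_inv_natCast (hx0 j) (Fintype.card_pos_iff.2 ⟨j⟩).ne'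
  calc ∏ i, x i ^ (1 + (Fintype.card ι : ℝ)⁻¹)
      = (∏ i, x i) * (∏ i, x i) ^ (Fintype.card ι : ℝ)⁻¹ := by
        rw [Real.finsetProd_rpow _ _ fun i _ => hx0 i, Real.rpow_add hP, Real.rpow_one]
    _ ≤ (∏ i, x i) * x j := by gcongr
    _ = ∏ i, x i * if i = j then x i else 1 := by
        rw [prod_mul_distrib, prod_ite_eq', if_pos (mem_univ j)]
    _ ≤ ∏ i, x i ^ n i := by
        refine prod_le_prod (fun i _ => mul_nonneg (hx0 i) (by split_ifs <;> linarith [hx0 i]))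
          fun i _ => ?_
        split_ifs with hij
        · subst hij
          rw [← sq]
          exact pow_le_pow_right₀ (hx i) hnj
        · rw [mul_one]
          exact le_self_pow₀ (hx i) (by linarith [hn i])

theorem mzv_summable (r : ℕ) (n : Fin (r + 1) → ℕ) (h1 : ∀ i, 1 ≤ n i)
    (h2 : 2 ≤ n (Fin.last r)) :
    Summable (fun k : {k : Fin (r + 1) → ℕ // StrictMono k ∧ ∀ i, 0 < k i} =>
      ∏ i, (1 : ℝ) / (k.1 i : ℝ) ^ n i) := by
  have hp : (1 : ℝ) < 1 + (Fintype.card (Fin (r + 1)) : ℝ)⁻¹ :=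
    lt_add_of_pos_right _ (by positivity)
  refine Summable.of_nonneg_of_le (fun k => by positivity) (fun k => ?_)
    ((summable_prod_one_div_nat_rpow hp).comp_injective Subtype.val_injective)
  have hk : ∀ i, (1 : ℝ) ≤ k.1 i := fun i => by exact_mod_cast k.2.2 i
  have hk_last : ∀ i, (k.1 i : ℝ) ≤ k.1 (Fin.last r) := fun i => by
    exact_mod_cast k.2.1.monotone (Fin.le_last i)
  simp only [Function.comp_apply, one_div, prod_inv_distrib]
  exact inv_anti₀ (prod_pos fun i _ => Real.rpow_pos_of_pos (zero_lt_one.trans_le (hk i)) _)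
    (prod_rpow_one_add_inv_card_le_prod_pow hk hk_last h1 h2)
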